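/- arXiv:2202.05404 — 2 statements merged into one kernel-verified Lean document; each statement's English description precedes it below -/
import Mathlib

section
/- Let S and A be nonempty finite sets, μ : S×A → ℝ with 0 < μ(s,a) ≤ 1 for all (s,a), D = diag(μ), P a row-stochastic (S×A)×S real matrix, R : S×A → ℝ, γ ∈ (0,1), and X a real (S×A)×n matrix such that XᵀDX is invertible. Define B : ℝ^{S×A} → ℝ^{S} by (Bq)(s) = max_{a∈A} q(s,a) and T_η(θ) = (1/(1+η)) (XᵀDX)^{-1} ( XᵀDR + γ XᵀD P B(Xθ) ). If ‖(XᵀDX)^{-1}‖_∞ · ‖Xᵀ‖_∞ · ‖X‖_∞ ≤ 1 + η, then there exists a unique θ_e ∈ ℝⁿ with T_η(θ_e) = θ_e, i.e. the regularized projected Bellman equation (1+η) XᵀDX θ_e = XᵀDR + γ XᵀD P B(Xθ_e) has a unique solution. -/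
/-!
The greedy max is 1-Lipschitz for the sup norm, and `D` and `P` have `∞`-operator norm at most `1`,
so `T_η` is Lipschitz with constant `γ ‖(XᵀDX)⁻¹‖ ‖Xᵀ‖ ‖X‖ / (1 + η) ≤ γ < 1`. Banach's fixed point
theorem gives a unique fixed point, and multiplying the fixed-point equation by `(1 + η) XᵀDX`
turns it into the Bellman equation.
-/

open Matrix

attribute [local instance] Matrix.linftyOpNormedAddCommGroup

/-- The greedy-max operator `(Bq)(s) = max_{a ∈ A} q(s,a)`. -/
noncomputable def greedyMax {S A : Type*} [Fintype A] [Nonempty A]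
    (q : S × A → ℝ) : S → ℝ :=
  fun s => Finset.univ.sup' Finset.univ_nonempty fun a => q (s, a)

/-- The regularized projected Bellman operator
`T_η(θ) = (1/(1+η)) (XᵀDX)⁻¹ (XᵀDR + γ XᵀD P B(Xθ))`. -/
noncomputable def Treg {S A : Type*} [Fintype S] [Fintype A] [Nonempty A]
    [DecidableEq S] [DecidableEq A] {n : ℕ}
    (μ : S × A → ℝ) (P : Matrix (S × A) S ℝ) (R : S × A → ℝ) (γ η : ℝ)
    (X : Matrix (S × A) (Fin n) ℝ) (θ : Fin n → ℝ) : Fin n → ℝ :=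
  (1 / (1 + η)) •
    ((Xᵀ * diagonal μ * X)⁻¹ *ᵥ
      ((Xᵀ * diagonal μ) *ᵥ R + γ • ((Xᵀ * diagonal μ * P) *ᵥ greedyMax (X *ᵥ θ))))

namespace Finset

theorem sup'_le_sup'_add {ι G : Type*} [AddCommGroup G] [LinearOrder G]
    [IsOrderedAddMonoid G] {s : Finset ι} (hs : s.Nonempty) {f g : ι → G} {c : G}
    (h : ∀ i ∈ s, f i ≤ g i + c) : s.sup' hs f ≤ s.sup' hs g + c := by
  rw [sup'_add]
  exact sup'_mono_fun h

theorem abs_sup'_sub_sup'_le {ι G : Type*} [AddCommGroup G] [LinearOrder G]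
    [IsOrderedAddMonoid G] {s : Finset ι} (hs : s.Nonempty) {f g : ι → G} {c : G}
    (h : ∀ i ∈ s, |f i - g i| ≤ c) : |s.sup' hs f - s.sup' hs g| ≤ c := by
  rw [abs_sub_le_iff, sub_le_iff_le_add', sub_le_iff_le_add']
  exact ⟨sup'_le_sup'_add hs fun i hi => sub_le_iff_le_add'.1 (abs_sub_le_iff.1 (h i hi)).1,
    sup'_le_sup'_add hs fun i hi => sub_le_iff_le_add'.1 (abs_sub_le_iff.1 (h i hi)).2⟩

end Finset

theorem norm_greedyMax_sub_le {S A : Type*} [Fintype S] [Fintype A] [Nonempty A]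
    (q r : S × A → ℝ) : ‖greedyMax q - greedyMax r‖ ≤ ‖q - r‖ := by
  refine (pi_norm_le_iff_of_nonneg (norm_nonneg _)).2 fun s => ?_
  refine Finset.abs_sup'_sub_sup'_le _ fun a _ => ?_
  simpa only [Pi.sub_apply, Real.norm_eq_abs] using norm_le_pi_norm (q - r) (s, a)

namespace Matrix

theorem linfty_opNorm_le_one_of_stochastic {m n : Type*} [Fintype m] [Fintype n]
    {P : Matrix m n ℝ} (hP0 : ∀ i j, 0 ≤ P i j) (hP1 : ∀ i, ∑ j, P i j = 1) : ‖P‖ ≤ 1 := by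
  rw [linfty_opNorm_def, NNReal.coe_le_one, Finset.sup_le_iff]
  intro i _
  rw [← NNReal.coe_le_one, NNReal.coe_sum]
  simp only [coe_nnnorm, Real.norm_of_nonneg (hP0 i _), hP1 i, le_refl]

theorem linfty_opNorm_diagonal_le_one {m : Type*} [Fintype m] [DecidableEq m] {μ : m → ℝ}
    (hμ : ∀ i, |μ i| ≤ 1) : ‖diagonal μ‖ ≤ 1 := by
  rw [linfty_opNorm_diagonal]
  exact (pi_norm_le_iff_of_nonneg zero_le_one).2 hμ

theorem one_div_smul_inv_mulVec_eq_iff {n K : Type*} [Fintype n] [DecidableEq n] [Field K]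
    {G : Matrix n n K} (hG : IsUnit G.det) {c : K} (hc : c ≠ 0) (v θ : n → K) :
    (1 / c) • (G⁻¹ *ᵥ v) = θ ↔ c • (G *ᵥ θ) = v := by
  constructor
  · rintro rfl
    simp [mulVec_smul, mulVec_mulVec, mul_nonsing_inv G hG, smul_smul, hc]
  · rintro rfl
    simp [mulVec_smul, mulVec_mulVec, nonsing_inv_mul G hG, smul_smul, hc]

end Matrix

section Treg

variable {S A : Type*} [Fintype S] [Fintype A] [Nonempty A] [DecidableEq S] [DecidableEq A]
  {n : ℕ} (μ : S × A → ℝ) (P : Matrix (S × A) S ℝ) (R : S × A → ℝ) (γ η : ℝ)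
  (X : Matrix (S × A) (Fin n) ℝ)

theorem Treg_sub (θ₁ θ₂ : Fin n → ℝ) :
    Treg μ P R γ η X θ₁ - Treg μ P R γ η X θ₂ =
      (γ / (1 + η)) • (((Xᵀ * diagonal μ * X)⁻¹ * Xᵀ * diagonal μ * P) *ᵥ
        (greedyMax (X *ᵥ θ₁) - greedyMax (X *ᵥ θ₂))) := by
  simp only [Treg, ← smul_sub, ← mulVec_sub, add_sub_add_left_eq_sub, mulVec_smul, smul_smul,
    mulVec_mulVec, Matrix.mul_assoc]
  congr 1
  ring

theorem lipschitzWith_Treg (hD : ‖diagonal μ‖ ≤ 1) (hP : ‖P‖ ≤ 1) (hγ : 0 ≤ γ)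
    (hη : 0 < 1 + η) (hnorm : ‖(Xᵀ * diagonal μ * X)⁻¹‖ * ‖Xᵀ‖ * ‖X‖ ≤ 1 + η) :
    LipschitzWith ⟨γ, hγ⟩ (Treg μ P R γ η X) := by
  refine LipschitzWith.of_dist_le_mul fun θ₁ θ₂ => ?_
  set G := Xᵀ * diagonal μ * X
  have hM : ‖G⁻¹ * Xᵀ * diagonal μ * P‖ ≤ ‖G⁻¹‖ * ‖Xᵀ‖ :=
    calc ‖G⁻¹ * Xᵀ * diagonal μ * P‖ ≤ ‖G⁻¹‖ * ‖Xᵀ‖ * ‖diagonal μ‖ * ‖P‖ := by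
          grw [linfty_opNorm_mul, linfty_opNorm_mul, linfty_opNorm_mul]
      _ ≤ ‖G⁻¹‖ * ‖Xᵀ‖ * 1 * 1 := by gcongr
      _ = ‖G⁻¹‖ * ‖Xᵀ‖ := by ring
  have hB : ‖greedyMax (X *ᵥ θ₁) - greedyMax (X *ᵥ θ₂)‖ ≤ ‖X‖ * ‖θ₁ - θ₂‖ :=
    (norm_greedyMax_sub_le _ _).trans (mulVec_sub X θ₁ θ₂ ▸ linfty_opNorm_mulVec _ _)
  rw [dist_eq_norm, dist_eq_norm, Treg_sub, norm_smul, Real.norm_of_nonneg (by positivity)]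
  calc γ / (1 + η) * ‖(G⁻¹ * Xᵀ * diagonal μ * P) *ᵥ
        (greedyMax (X *ᵥ θ₁) - greedyMax (X *ᵥ θ₂))‖
      ≤ γ / (1 + η) * (‖G⁻¹‖ * ‖Xᵀ‖ * (‖X‖ * ‖θ₁ - θ₂‖)) := by
        grw [linfty_opNorm_mulVec, hM, hB]
    _ = γ / (1 + η) * (‖G⁻¹‖ * ‖Xᵀ‖ * ‖X‖) * ‖θ₁ - θ₂‖ := by ring
    _ ≤ γ / (1 + η) * (1 + η) * ‖θ₁ - θ₂‖ := by gcongr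
    _ = γ * ‖θ₁ - θ₂‖ := by field_simp

end Treg

theorem stmt_6_general {S A : Type*} [Fintype S] [Fintype A] [Nonempty A]
    [DecidableEq S] [DecidableEq A] {n : ℕ}
    (μ : S × A → ℝ) (hμ : ∀ p, 0 < μ p ∧ μ p ≤ 1)
    (P : Matrix (S × A) S ℝ) (hP0 : ∀ p s, 0 ≤ P p s) (hP1 : ∀ p, ∑ s, P p s = 1)
    (R : S × A → ℝ) (γ : ℝ) (hγ : γ ∈ Set.Ioo (0 : ℝ) 1)
    (X : Matrix (S × A) (Fin n) ℝ) (hX : IsUnit (Xᵀ * diagonal μ * X).det)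
    (η : ℝ) (hη : 0 ≤ η)
    (hnorm : ‖(Xᵀ * diagonal μ * X)⁻¹‖ * ‖Xᵀ‖ * ‖X‖ ≤ 1 + η) :
    (∃! θe : Fin n → ℝ, Treg μ P R γ η X θe = θe) ∧
    (∃! θe : Fin n → ℝ,
      (1 + η) • ((Xᵀ * diagonal μ * X) *ᵥ θe) =
        (Xᵀ * diagonal μ) *ᵥ R +
          γ • ((Xᵀ * diagonal μ * P) *ᵥ greedyMax (X *ᵥ θe))) := by
  have hη' : 0 < 1 + η := by linarith
  have hD : ‖diagonal μ‖ ≤ 1 :=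
    linfty_opNorm_diagonal_le_one fun p => abs_le.2 ⟨by linarith [(hμ p).1], (hμ p).2⟩
  have hcontr : ContractingWith ⟨γ, hγ.1.le⟩ (Treg μ P R γ η X) :=
    ⟨hγ.2, lipschitzWith_Treg μ P R γ η X hD (linfty_opNorm_le_one_of_stochastic hP0 hP1)
      hγ.1.le hη' hnorm⟩
  have hfix : ∃! θe, Treg μ P R γ η X θe = θe :=
    ⟨_, hcontr.fixedPoint_isFixedPt, fun _ h => hcontr.fixedPoint_unique h⟩
  refine ⟨hfix, ?_⟩
  simpa only [Treg, one_div_smul_inv_mulVec_eq_iff hX hη'.ne'] using hfix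

/-- If `‖(XᵀDX)⁻¹‖_∞ ‖Xᵀ‖_∞ ‖X‖_∞ ≤ 1 + η`, then `T_η` has a unique fixed point `θ_e`,
i.e. the regularized projected Bellman equation
`(1+η) XᵀDX θ_e = XᵀDR + γ XᵀD P B(Xθ_e)` has a unique solution. -/
theorem stmt_6 {S A : Type*} [Fintype S] [Fintype A] [Nonempty S] [Nonempty A]
    [DecidableEq S] [DecidableEq A] {n : ℕ}
    (μ : S × A → ℝ) (hμ : ∀ p, 0 < μ p ∧ μ p ≤ 1)
    (P : Matrix (S × A) S ℝ) (hP0 : ∀ p s, 0 ≤ P p s) (hP1 : ∀ p, ∑ s, P p s = 1)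
    (R : S × A → ℝ) (γ : ℝ) (hγ : γ ∈ Set.Ioo (0 : ℝ) 1)
    (X : Matrix (S × A) (Fin n) ℝ) (hX : IsUnit (Xᵀ * diagonal μ * X).det)
    (η : ℝ) (hη : 0 ≤ η)
    (hnorm : ‖(Xᵀ * diagonal μ * X)⁻¹‖ * ‖Xᵀ‖ * ‖X‖ ≤ 1 + η) :
    (∃! θe : Fin n → ℝ, Treg μ P R γ η X θe = θe) ∧
    (∃! θe : Fin n → ℝ,
      (1 + η) • ((Xᵀ * diagonal μ * X) *ᵥ θe) =
        (Xᵀ * diagonal μ) *ᵥ R +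
          γ • ((Xᵀ * diagonal μ * P) *ᵥ greedyMax (X *ᵥ θe))) :=
  stmt_6_general μ hμ P hP0 hP1 R γ hγ X hX η hη hnorm
end

section
/- Let S and A be nonempty finite sets, μ : S×A → ℝ positive, D = diag(μ), P an (S×A)×S real matrix with nonnegative entries, η ≥ 0, γ ≥ 0, c ∈ ℝⁿ, and let X be a real (S×A)×n matrix with nonnegative entries such that Λ := XᵀDX is a diagonal matrix. Define B : ℝ^{S×A} → ℝ^{S} by (Bq)(s) = max_{a∈A} q(s,a) and f̄(y) = −(1+η) Λ y + γ XᵀD P B(Xy) + c. Then f̄ is quasi-monotone increasing: for every i ∈ {1,…,n} and every y, z ∈ ℝⁿ with y_i = z_i and y_j ≤ z_j for all j ≠ i, one has f̄_i(y) ≤ f̄_i(z). -/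
open Matrix

/-!
The map splits as a linear part `y ↦ -(1+η) Λ y`, whose matrix has vanishing (in particular
nonnegative) off-diagonal entries, plus the monotone part `y ↦ γ XᵀDP B(Xy)`, composed of the
monotone greedy max and of multiplication by entrywise nonnegative matrices, plus a constant.
Linear maps with nonnegative off-diagonal entries and monotone maps are quasi-monotone, and
so are sums of quasi-monotone maps.
-/

def QuasiMonotone {ι α β : Type*} [Preorder α] [Preorder β] (f : (ι → α) → ι → β) : Prop :=
  ∀ (i : ι) (y z : ι → α), y i = z i → (∀ j, j ≠ i → y j ≤ z j) → f y i ≤ f z i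

section QuasiMonotone

variable {ι α β : Type*} [Preorder α]

theorem Monotone.quasiMonotone [Preorder β] {f : (ι → α) → ι → β} (hf : Monotone f) :
    QuasiMonotone f := by
  intro i y z hi hne
  refine hf (fun j => ?_) i
  by_cases hj : j = i
  · exact hj ▸ hi.le
  · exact hne j hj

theorem QuasiMonotone.add [AddCommMonoid β] [PartialOrder β] [IsOrderedAddMonoid β]
    {f g : (ι → α) → ι → β} (hf : QuasiMonotone f) (hg : QuasiMonotone g) :
    QuasiMonotone fun y => f y + g y :=
  fun i y z hi hne => add_le_add (hf i y z hi hne) (hg i y z hi hne)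

theorem QuasiMonotone.add_const [AddCommMonoid β] [PartialOrder β] [IsOrderedAddMonoid β]
    {f : (ι → α) → ι → β} (hf : QuasiMonotone f) (c : ι → β) :
    QuasiMonotone fun y => f y + c :=
  fun i y z hi hne => add_le_add_left (hf i y z hi hne) (c i)

end QuasiMonotone

namespace Matrix

theorem diagonal_apply_nonneg {n R : Type*} [DecidableEq n] [Zero R] [Preorder R] {d : n → R}
    (hd : 0 ≤ d) (i j : n) : 0 ≤ diagonal d i j := by
  by_cases h : i = j
  · simpa [h] using hd j
  · simp [h]

variable {m n R : Type*} [Fintype n] [Ring R] [PartialOrder R] [IsOrderedRing R]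

theorem quasiMonotone_mulVec {M : Matrix n n R} (hM : ∀ i j, i ≠ j → 0 ≤ M i j) :
    QuasiMonotone (M *ᵥ ·) := by
  intro i y z hi hne
  rw [← sub_nonneg, ← Pi.sub_apply, ← mulVec_sub]
  refine Finset.sum_nonneg fun j _ => ?_
  by_cases hj : j = i
  · simp [hj, hi]
  · exact mul_nonneg (hM i j (Ne.symm hj)) (sub_nonneg.2 (hne j hj))

theorem monotone_mulVec {M : Matrix m n R} (hM : ∀ i j, 0 ≤ M i j) : Monotone (M *ᵥ ·) :=
  fun _ _ hyz i => dotProduct_le_dotProduct_of_nonneg_left hyz (hM i)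

theorem mul_apply_nonneg {l : Type*} {M : Matrix l n R} {N : Matrix n m R}
    (hM : ∀ i j, 0 ≤ M i j) (hN : ∀ i j, 0 ≤ N i j) (i : l) (k : m) : 0 ≤ (M * N) i k :=
  Finset.sum_nonneg fun j _ => mul_nonneg (hM i j) (hN j k)

end Matrix

theorem greedyMax_monotone {S A : Type*} [Fintype A] [Nonempty A] :
    Monotone (greedyMax : (S × A → ℝ) → S → ℝ) :=
  fun _ _ hqr s => Finset.sup'_mono_fun fun a _ => hqr (s, a)

theorem stmt_12_general {S A : Type*} [Fintype S] [Fintype A] [Nonempty A]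
    [DecidableEq S] [DecidableEq A] {n : ℕ}
    (μ : S × A → ℝ) (hμ : ∀ p, 0 < μ p)
    (P : Matrix (S × A) S ℝ) (hP0 : ∀ p s, 0 ≤ P p s)
    (η : ℝ) (γ : ℝ) (hγ : 0 ≤ γ) (c : Fin n → ℝ)
    (X : Matrix (S × A) (Fin n) ℝ) (hX0 : ∀ p j, 0 ≤ X p j)
    (hdiag : ∀ i j : Fin n, i ≠ j → (Xᵀ * diagonal μ * X) i j = 0) :
    ∀ (i : Fin n) (y z : Fin n → ℝ), y i = z i →
      (∀ j : Fin n, j ≠ i → y j ≤ z j) →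
      (-((1 + η) • ((Xᵀ * diagonal μ * X) *ᵥ y)) +
          γ • ((Xᵀ * diagonal μ * P) *ᵥ greedyMax (X *ᵥ y)) + c) i ≤
        (-((1 + η) • ((Xᵀ * diagonal μ * X) *ᵥ z)) +
          γ • ((Xᵀ * diagonal μ * P) *ᵥ greedyMax (X *ᵥ z)) + c) i := by
  have hXtD : ∀ j p, 0 ≤ (Xᵀ * diagonal μ) j p :=
    mul_apply_nonneg (fun j p => hX0 p j) (diagonal_apply_nonneg fun p => (hμ p).le)
  have hlin : QuasiMonotone fun y => -((1 + η) • ((Xᵀ * diagonal μ * X) *ᵥ y)) := by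
    simpa only [smul_mulVec, neg_mulVec] using
      quasiMonotone_mulVec (M := -((1 + η) • (Xᵀ * diagonal μ * X))) fun i j hij => by
        simp [hdiag i j hij]
  have hmono : Monotone fun y => γ • ((Xᵀ * diagonal μ * P) *ᵥ greedyMax (X *ᵥ y)) :=
    ((monotone_mulVec (mul_apply_nonneg hXtD hP0)).comp
      (greedyMax_monotone.comp (monotone_mulVec hX0))).const_smul hγ
  exact (hlin.add hmono.quasiMonotone).add_const c

/-- If the feature matrix `X` has nonnegative entries, `Λ = XᵀDX` is diagonal, `P` has
nonnegative entries, and `γ, η ≥ 0`, then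
`f̄(y) = −(1+η) Λ y + γ XᵀD P B(Xy) + c` is quasi-monotone increasing. -/
theorem stmt_12 {S A : Type*} [Fintype S] [Fintype A] [Nonempty S] [Nonempty A]
    [DecidableEq S] [DecidableEq A] {n : ℕ}
    (μ : S × A → ℝ) (hμ : ∀ p, 0 < μ p)
    (P : Matrix (S × A) S ℝ) (hP0 : ∀ p s, 0 ≤ P p s)
    (η : ℝ) (hη : 0 ≤ η) (γ : ℝ) (hγ : 0 ≤ γ) (c : Fin n → ℝ)
    (X : Matrix (S × A) (Fin n) ℝ) (hX0 : ∀ p j, 0 ≤ X p j)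
    (hdiag : ∀ i j : Fin n, i ≠ j → (Xᵀ * diagonal μ * X) i j = 0) :
    ∀ (i : Fin n) (y z : Fin n → ℝ), y i = z i →
      (∀ j : Fin n, j ≠ i → y j ≤ z j) →
      (-((1 + η) • ((Xᵀ * diagonal μ * X) *ᵥ y)) +
          γ • ((Xᵀ * diagonal μ * P) *ᵥ greedyMax (X *ᵥ y)) + c) i ≤
        (-((1 + η) • ((Xᵀ * diagonal μ * X) *ᵥ z)) +
          γ • ((Xᵀ * diagonal μ * P) *ᵥ greedyMax (X *ᵥ z)) + c) i :=
  stmt_12_general μ hμ P hP0 η γ hγ c X hX0 hdiag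
end
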